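/- arXiv:1804.04152 — 3 statements merged into one kernel-verified Lean document; each statement's English description precedes it below -/
import Mathlib

section
/- Let T = (V, r, P, L) be a tree interpolation problem with tree interpolant I. Then for every node v, the conjunction of I(v) with the labels L(u) over all non-descendants u of v is unsatisfiable. -/
/-- Let `(V, r, parent, L)` be a tree interpolation problem with tree interpolant `I`.
Then for every node `v`, the conjunction of `I v` with the labels `L u` over all
non-descendants `u` of `v` is unsatisfiable. -/
theorem stmt2 {σ V : Type} [Fintype V] (r : V) (parent : V → V)
    (hroot : parent r = r)
    (htree : ∀ v, ∃ n, parent^[n] v = r)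
    (L I : V → σ → Prop)
    (hunsat : ∀ s, ¬ ∀ v, L v s)
    (hIr : ∀ s, ¬ I r s)
    (hitp : ∀ v s, (∀ c, c ≠ r → parent c = v → I c s) → L v s → I v s) :
    ∀ v s, ¬ (I v s ∧ ∀ u, ¬ (∃ n, parent^[n] u = v) → L u s) := by
  classical
  rintro v s ⟨hv, hnd⟩
  let d : V → ℕ := fun x => Nat.find (htree x)
  have hdspec : ∀ x, parent^[d x] x = r := fun x => Nat.find_spec (htree x)
  have hdmin : ∀ x n, parent^[n] x = r → d x ≤ n := fun x n h => Nat.find_le h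
  have hfix : ∀ n, parent^[n] r = r := fun n => Function.iterate_fixed hroot n
  have lemA : ∀ x m, 1 ≤ m → parent^[m] x = x → x = r := by
    intro x m hm hcyc
    have hcycles : ∀ k, parent^[m * k] x = x := by
      intro k
      induction k with
      | zero => simp
      | succ k ih =>
        have h : m * (k + 1) = m * k + m := by ring
        rw [h, Function.iterate_add_apply, hcyc, ih]
    have h1 : parent^[m * d x] x = x := hcycles (d x)
    obtain ⟨m', rfl⟩ : ∃ m', m = m' + 1 := ⟨m - 1, by omega⟩
    have h2 : (m' + 1) * d x = m' * d x + d x := by ring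
    rw [h2, Function.iterate_add_apply, hdspec, hfix] at h1
    exact h1.symm
  have hd0 : ∀ x, d x = 0 → x = r := by
    intro x h
    have hs := hdspec x
    rw [h] at hs
    simpa using hs
  have hdpar : ∀ x, x ≠ r → d (parent x) < d x := by
    intro x hx
    have h1 : 1 ≤ d x := by
      rcases Nat.eq_zero_or_pos (d x) with h | h
      · exact absurd (hd0 x h) hx
      · exact h
    have h2 : parent^[d x - 1] (parent x) = r := by
      have hs := hdspec x
      rw [show d x = (d x - 1) + 1 by omega, Function.iterate_succ_apply] at hs
      exact hs
    have := hdmin (parent x) _ h2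
    omega
  have hdistinct : ∀ x (i j : ℕ), i < j → j ≤ d x → parent^[i] x = parent^[j] x → False := by
    intro x i j hij hjd heq
    obtain ⟨a, rfl⟩ : ∃ a, j = a + i := ⟨j - i, by omega⟩
    rw [Function.iterate_add_apply] at heq
    have hyr : parent^[i] x = r := lemA _ a (by omega) heq.symm
    have := hdmin x i hyr
    omega
  have hdlt : ∀ x, d x < Fintype.card V := by
    intro x
    have hinj : Function.Injective (fun i : Fin (d x + 1) => parent^[(i : ℕ)] x) := by
      intro i j hij
      simp only at hij
      rcases lt_trichotomy (i : ℕ) (j : ℕ) with h | h | h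
      · exact absurd (hdistinct x i j h (by omega) hij) (fun h => h)
      · exact Fin.ext h
      · exact absurd (hdistinct x j i h (by omega) hij.symm) (fun h => h)
    have := Fintype.card_le_of_injective _ hinj
    simp at this
    omega
  have D : ∀ k c, Fintype.card V - d c ≤ k →
      (∀ u, (∃ n, parent^[n] u = c) → L u s) → I c s := by
    intro k
    induction k with
    | zero =>
      intro c hk _
      have := hdlt c
      omega
    | succ k ih =>
      intro c hk hdesc
      apply hitp c s
      · intro c' hc'r hpc'
        apply ih c'
        · have := hdpar c' hc'r
          rw [hpc'] at this
          omega
        · rintro u ⟨n, hn⟩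
          exact hdesc u ⟨n + 1, by rw [Function.iterate_succ_apply', hn, hpc']⟩
      · exact hdesc c ⟨0, rfl⟩
  have main : ∀ k w, d w ≤ k → I w s →
      (∀ u, ¬ (∃ n, parent^[n] u = w) → L u s) → False := by
    intro k
    induction k with
    | zero =>
      intro w hk hI _
      have hw : w = r := hd0 w (by omega)
      exact hIr s (hw ▸ hI)
    | succ k ih =>
      intro w hk hI hw
      by_cases hwr : w = r
      · exact hIr s (hwr ▸ hI)
      · have hwnotdesc : ¬ ∃ n, parent^[n] (parent w) = w := by
          rintro ⟨n, hn⟩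
          apply hwr
          exact lemA w (n + 1) (by omega) (by rw [Function.iterate_succ_apply]; exact hn)
        have hIp : I (parent w) s := by
          apply hitp (parent w) s
          · intro c' hc'r hpc'
            by_cases hc'w : c' = w
            · exact hc'w ▸ hI
            · apply D (Fintype.card V - d c') c' le_rfl
              rintro u ⟨n, hn⟩
              apply hw
              rintro ⟨m, hm⟩
              rcases le_or_gt n m with h | h
              · obtain ⟨a, rfl⟩ : ∃ a, m = a + n := ⟨m - n, by omega⟩
                rw [Function.iterate_add_apply, hn] at hm
                rcases Nat.eq_zero_or_pos a with ha | ha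
                · apply hc'w
                  rw [ha] at hm
                  simpa using hm
                · obtain ⟨b, rfl⟩ : ∃ b, a = b + 1 := ⟨a - 1, by omega⟩
                  rw [Function.iterate_succ_apply, hpc'] at hm
                  exact hwnotdesc ⟨b, hm⟩
              · obtain ⟨a, rfl⟩ : ∃ a, n = a + m := ⟨n - m, by omega⟩
                rw [Function.iterate_add_apply, hm] at hn
                obtain ⟨b, rfl⟩ : ∃ b, a = b + 1 := ⟨a - 1, by omega⟩
                have hcyc : parent^[b + 1] (parent w) = parent w := by
                  rw [← Function.iterate_succ_apply, Function.iterate_succ_apply', hn, hpc']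
                have hpr : parent w = r := lemA (parent w) (b + 1) (by omega) hcyc
                apply hc'r
                rw [← hn, Function.iterate_succ_apply, hpr, hfix]
          · exact hw (parent w) hwnotdesc
        apply ih (parent w) (by have := hdpar w hwr; omega) hIp
        intro u hu
        apply hw u
        rintro ⟨n, hn⟩
        exact hu ⟨n + 1, by rw [Function.iterate_succ_apply', hn]⟩
  exact main (d v) v le_rfl hv hnd
end

section
/- If the abstract domain A' obtained after refinement contains, for each node v of the tree interpolant I, a predicate template generalizing I(v), and the AGS is precise with respect to A' (it only returns programs P' such that the abstract execution of P' is consistent with the examples), then the spurious program P whose tree interpolation problem produced I is rejected: abstractly executing P using transformers at least as precise as the node annotations I yields at each node a value implying I(v), and at the root implies false, contradicting consistency with the output example. -/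
/-- Rejection of the spurious program after refinement: let `(V, r, parent, L)` be the
tree interpolation problem built from the AST of a spurious program `P` and failing
example output `e_out` (the root is a dummy node whose label asserts that its only child
`v0` equals `e_out`), and let `I` be the tree interpolant (whose node formulas depend only
on the node's own variable).  If the abstract execution `A` uses transformers at least as
precise as the node annotations (each abstract value at a node is justified by some
assignment consistent with the children's abstract values and the node's semantics), then
the abstract value at each node implies `I v`, and the abstract output at the root's child
is inconsistent with `e_out`; hence `P` is rejected. -/
theorem stmt17 {D V : Type} [Fintype V] (r v0 : V) (parent : V → V)
    (hroot : parent r = r) (hchild : parent v0 = r) (hne : v0 ≠ r)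
    (honly : ∀ c, c ≠ r → parent c = r → c = v0)
    (htree : ∀ v, ∃ n, parent^[n] v = r)
    (e_out : D)
    (L : V → (V → D) → Prop)
    (hLr : ∀ s, L r s ↔ s v0 = e_out)
    (I : V → (V → D) → Prop)
    (hIr : ∀ s, ¬ I r s)
    (hitp : ∀ v s, (∀ c, c ≠ r → parent c = v → I c s) → L v s → I v s)
    (hdep : ∀ v (s s' : V → D), s v = s' v → I v s → I v s')
    (A : V → D → Prop)
    (hstep : ∀ v, v ≠ r → ∀ d, A v d →
      ∃ s : V → D, s v = d ∧ (∀ c, c ≠ r → parent c = v → A c (s c)) ∧ L v s) :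
    (∀ v, v ≠ r → ∀ d, A v d → ∀ s : V → D, s v = d → I v s) ∧ ¬ A v0 e_out := by
  classical
  -- depth function: minimal n with parent^[n] v = r
  set f : V → ℕ := fun v => Nat.find (htree v) with hf
  have hfspec : ∀ v, parent^[f v] v = r := fun v => Nat.find_spec (htree v)
  have hfmin : ∀ v n, parent^[n] v = r → f v ≤ n := fun v n h => Nat.find_min' (htree v) h
  -- f strictly increases from parent to child
  have hmono : ∀ c, c ≠ r → f (parent c) < f c := by
    intro c hc
    have h1 : 1 ≤ f c := by
      rcases Nat.eq_zero_or_pos (f c) with h | h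
      · exfalso; apply hc; have := hfspec c; rw [h] at this; simpa using this
      · exact h
    have : parent^[f c - 1] (parent c) = r := by
      have := hfspec c
      rw [← Function.iterate_succ_apply, Nat.succ_eq_add_one, Nat.sub_add_cancel h1]
      exact this
    have := hfmin (parent c) _ this
    omega
  -- f is bounded by card V
  have hbound : ∀ v, f v < Fintype.card V := by
    intro v
    have hdist : ∀ i j : ℕ, i < j → j ≤ f v → parent^[i] v ≠ parent^[j] v := by
      intro i j hlt hj hij
      have key : parent^[f v - j + i] v = r := by
        have h1 : parent^[f v - j] (parent^[j] v) = r := by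
          rw [← Function.iterate_add_apply, Nat.sub_add_cancel hj]
          exact hfspec v
        rw [← hij] at h1
        rw [Function.iterate_add_apply]
        exact h1
      have := hfmin v _ key
      omega
    have hinj : Function.Injective (fun i : Fin (f v + 1) => parent^[(i : ℕ)] v) := by
      intro i j hij
      simp only at hij
      by_contra hne'
      rcases Nat.lt_trichotomy (i : ℕ) (j : ℕ) with h | h | h
      · exact hdist _ _ h (Nat.lt_succ_iff.mp j.isLt) hij
      · exact hne' (Fin.ext h)
      · exact hdist _ _ h (Nat.lt_succ_iff.mp i.isLt) hij.symm
    have := Fintype.card_le_of_injective _ hinj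
    simp at this
    omega
  -- main claim by induction on card V - f v
  have main : ∀ k v, v ≠ r → Fintype.card V - f v ≤ k →
      ∀ d, A v d → ∀ s : V → D, s v = d → I v s := by
    intro k
    induction k with
    | zero =>
      intro v hv hk
      exfalso
      have := hbound v
      omega
    | succ k ih =>
      intro v hv hk d hA s hs
      obtain ⟨s', hs'v, hchildren, hL⟩ := hstep v hv d hA
      have hIv : I v s' := by
        apply hitp v s' _ hL
        intro c hc hpc
        have hfc : f v < f c := by rw [← hpc]; exact hmono c hc
        have : Fintype.card V - f c ≤ k := by
          have := hbound c; omega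
        exact ih c hc this (s' c) (hchildren c hc hpc) s' rfl
      exact hdep v s' s (by rw [hs'v, hs]) hIv
  have main' : ∀ v, v ≠ r → ∀ d, A v d → ∀ s : V → D, s v = d → I v s :=
    fun v hv => main (Fintype.card V - f v) v hv le_rfl
  refine ⟨main', ?_⟩
  intro hA
  set s : V → D := fun _ => e_out with hsdef
  have hIv0 : I v0 s := main' v0 hne e_out hA s rfl
  have hLr' : L r s := (hLr s).mpr rfl
  have : I r s := by
    apply hitp r s _ hLr'
    intro c hc hpc
    rw [honly c hc hpc]
    exact hIv0
  exact hIr s this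
end

section
/- Monotonicity of abstraction refinement for pruning: if abstract domain A₂ refines A₁ (every predicate expressible in A₁ is expressible in A₂) and both use their respective unique best transformers, then every program rejected by abstract execution under (A₁, T₁) is also rejected under (A₂, T₂). -/
/-- Monotonicity of abstraction refinement for pruning: abstract values are identified
with their concretizations (sets of concrete values); `E1` and `E2` are the families of
expressible abstract values of domains `A₁` and `A₂`, with `A₂` refining `A₁`
(`E1 ⊆ E2`).  The abstract executions `a1`, `a2` of a program (an AST `(V, r, parent)`
with root's child `v0` and node semantics `L`) use the respective unique best
transformers: at each node the abstract value is an expressible sound output for the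
children's abstract values and is the strongest such.  If the program is rejected under
`(A₁, T₁)` — the required output `e_out` is not in the concretization of the abstract
output — then it is also rejected under `(A₂, T₂)`. -/
theorem stmt18 {D V : Type} [Fintype V] (r v0 : V) (parent : V → V)
    (hroot : parent r = r) (hne : v0 ≠ r)
    (htree : ∀ v, ∃ n, parent^[n] v = r)
    (L : V → (V → D) → Prop)
    (E1 E2 : Set (Set D)) (href : E1 ⊆ E2)
    (a1 a2 : V → Set D)
    (hbest1 : ∀ v, v ≠ r →
      a1 v ∈ E1 ∧
      (∀ s : V → D, (∀ c, c ≠ r → parent c = v → s c ∈ a1 c) → L v s → s v ∈ a1 v) ∧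
      (∀ S ∈ E1,
        (∀ s : V → D, (∀ c, c ≠ r → parent c = v → s c ∈ a1 c) → L v s → s v ∈ S) →
        a1 v ⊆ S))
    (hbest2 : ∀ v, v ≠ r →
      a2 v ∈ E2 ∧
      (∀ s : V → D, (∀ c, c ≠ r → parent c = v → s c ∈ a2 c) → L v s → s v ∈ a2 v) ∧
      (∀ S ∈ E2,
        (∀ s : V → D, (∀ c, c ≠ r → parent c = v → s c ∈ a2 c) → L v s → s v ∈ S) →
        a2 v ⊆ S))
    (e_out : D)
    (hrej : e_out ∉ a1 v0) :
    e_out ∉ a2 v0 := by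
  classical
  suffices h : a2 v0 ⊆ a1 v0 from fun hmem => hrej (h hmem)
  set d : V → ℕ := fun v => Nat.find (htree v) with hd_def
  have hdspec : ∀ v, parent^[d v] v = r := fun v => Nat.find_spec (htree v)
  have hdmin : ∀ v n, parent^[n] v = r → d v ≤ n := fun v n h => Nat.find_le h
  have hdch : ∀ c v, c ≠ r → parent c = v → d v < d c := by
    intro c v hc hp
    have h1 : 1 ≤ d c := by
      rcases Nat.eq_zero_or_pos (d c) with h | h
      · exfalso; apply hc; have := hdspec c; rw [h] at this; simpa using this
      · exact h
    have h2 : parent^[d c - 1] v = r := by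
      rw [← hp, ← Function.iterate_succ_apply, Nat.succ_eq_add_one,
        Nat.sub_add_cancel h1]
      exact hdspec c
    have := hdmin v _ h2
    omega
  have hdlt : ∀ v, d v < Fintype.card V := by
    intro v
    have main : ∀ i j : Fin (d v + 1), (i : ℕ) < (j : ℕ) →
        parent^[(i : ℕ)] v = parent^[(j : ℕ)] v → False := by
      intro i j hlt hij
      have hjle : (j : ℕ) ≤ d v := by omega
      have hkey : parent^[d v - ((j : ℕ) - (i : ℕ))] v = r := by
        have h1 : d v - ((j : ℕ) - (i : ℕ)) = (d v - (j : ℕ)) + (i : ℕ) := by omega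
        rw [h1, Function.iterate_add_apply, hij, ← Function.iterate_add_apply]
        have h2 : d v - (j : ℕ) + (j : ℕ) = d v := by omega
        rw [h2]; exact hdspec v
      have := hdmin v _ hkey
      omega
    have hinj : Function.Injective (fun i : Fin (d v + 1) => parent^[(i : ℕ)] v) := by
      intro i j hij
      simp only at hij
      rcases lt_trichotomy (i : ℕ) (j : ℕ) with h | h | h
      · exact absurd (main i j h hij) (by simp)
      · exact Fin.ext h
      · exact absurd (main j i h hij.symm) (by simp)
    have := Fintype.card_le_of_injective _ hinj
    simpa using this
  have key : ∀ k, ∀ v, v ≠ r → Fintype.card V ≤ d v + k → a2 v ⊆ a1 v := by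
    intro k
    induction k with
    | zero => intro v hv hle; exact absurd hle (by have := hdlt v; omega)
    | succ k ih =>
      intro v hv hle
      obtain ⟨hE1, hsound1, _⟩ := hbest1 v hv
      obtain ⟨_, _, hbstr2⟩ := hbest2 v hv
      apply hbstr2 (a1 v) (href hE1)
      intro s hs hL
      apply hsound1 s _ hL
      intro c hc hpc
      have hdc := hdch c v hc hpc
      exact ih c hc (by omega) (hs c hc hpc)
  exact key (Fintype.card V) v0 hne (by omega)
end
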